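/- (Convergence of the idealized two-timescale MFG scheme.) Under Assumption (Lip), L_p < |𝒳|c_min, and 0 < φ < φ_max, let (ρ^Q_n)_n and (ρ^μ_n)_n be sequences in (0,1) with ∑_n ρ^Q_n = ∑_n ρ^μ_n = ∞, ∑_n ((ρ^Q_n)² + (ρ^μ_n)²) < ∞, and ρ^μ_n/ρ^Q_n → 0 as n → ∞. Define, from any initial (Q₀,μ₀) ∈ ℝ^{𝒳×𝒜} × Δ(𝒳), the iterates μ_{n+1} = μ_n + ρ^μ_n P₂(Q_n,μ_n) and Q_{n+1} = Q_n + ρ^Q_n T₂(Q_n,μ_n). Then (μ_n, Q_n) converges as n → ∞ to (μ*φ, Q*_{μ*φ}), where μ*φ is the unique fixed point of μ ↦ P^{softmin_φ Q*_μ, μ}μ and Q*_{μ*φ} is the unique fixed point of B_{μ*φ}. -/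

import Mathlib

open Finset Filter
open scoped Classical

noncomputable section

variable {X A : Type*}

/-- A probability vector on a finite set. -/
def IsProb [Fintype X] (μ : X → ℝ) : Prop := (∀ x, 0 ≤ μ x) ∧ ∑ x, μ x = 1

/-- ℓ¹ norm of a signed measure / vector on a finite set. -/
def l1 [Fintype X] (μ : X → ℝ) : ℝ := ∑ x, |μ x|

/-- Sup norm of a Q-table. -/
def supQ [Fintype X] [Fintype A] [Nonempty X] [Nonempty A] (Q : X → A → ℝ) : ℝ :=
  Finset.univ.sup' Finset.univ_nonempty (fun xa : X × A => |Q xa.1 xa.2|)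

/-- Minimum of a row of a Q-table (minimum over actions). -/
def minRow [Fintype A] [Nonempty A] (q : A → ℝ) : ℝ :=
  Finset.univ.inf' Finset.univ_nonempty q

/-- The soft-min distribution over actions with parameter φ. -/
def softmin [Fintype A] (φ : ℝ) (z : A → ℝ) (a : A) : ℝ :=
  Real.exp (-φ * z a) / ∑ a', Real.exp (-φ * z a')

/-- The argmin_e policy: uniform over the minimizers, zero elsewhere. -/
def argminE [Fintype A] [Nonempty A] (q : A → ℝ) (a : A) : ℝ :=
  if q a = minRow q then (1 : ℝ) / (Finset.univ.filter fun a' => q a' = minRow q).card else 0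

/-- (P^{π,μ} ν)(x) = ∑_{x'} ν(x') ∑_a π(a|x') p(x|x',a,μ). -/
def Ppush [Fintype X] [Fintype A] (p : X → A → (X → ℝ) → X → ℝ)
    (π : X → A → ℝ) (μ ν : X → ℝ) (x : X) : ℝ :=
  ∑ x', ν x' * ∑ a, π x' a * p x' a μ x

/-- P₂(Q,μ) = P^{softmin_φ Q, μ} μ − μ. -/
def P2 [Fintype X] [Fintype A] (φ : ℝ) (p : X → A → (X → ℝ) → X → ℝ)
    (Q : X → A → ℝ) (μ : X → ℝ) (x : X) : ℝ :=
  Ppush p (fun x' => softmin φ (Q x')) μ μ x - μ x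

/-- The Bellman operator (B_μ Q)(x,a) = f(x,a,μ) + γ ∑_{x'} p(x'|x,a,μ) min_{a'} Q(x',a'). -/
def bell [Fintype X] [Fintype A] [Nonempty A]
    (f : X → A → (X → ℝ) → ℝ) (p : X → A → (X → ℝ) → X → ℝ) (γ : ℝ)
    (μ : X → ℝ) (Q : X → A → ℝ) (x : X) (a : A) : ℝ :=
  f x a μ + γ * ∑ x', p x a μ x' * minRow (Q x')

/-- T₂(Q,μ) = B_μ Q − Q. -/
def T2 [Fintype X] [Fintype A] [Nonempty A]
    (f : X → A → (X → ℝ) → ℝ) (p : X → A → (X → ℝ) → X → ℝ) (γ : ℝ)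
    (Q : X → A → ℝ) (μ : X → ℝ) (x : X) (a : A) : ℝ :=
  bell f p γ μ Q x a - Q x a

/-
The Q-tracking error `aₙ = ‖Qₙ - Q*_{μₙ}‖∞` and the measure error `bₙ = ‖μₙ - μ*‖₁` satisfy
coupled contractive recursions. The Bellman operator is a `γ`-contraction and `μ ↦ Q*_μ` is
Lipschitz with constant `L_Q = (L_f + γ/(1-γ) L_p ‖f‖∞)/(1-γ)`, so
`aₙ₊₁ ≤ (1 - (1-γ)ρ^Q_n) aₙ + 2 L_Q ρ^μ_n`: the slow drift of `μₙ` is negligible on the fast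
`Q` timescale because `ρ^μ_n/ρ^Q_n → 0`. The softmin policy is `φ`-Lipschitz from sup to `ℓ¹`,
the minorisation `p ≥ c_min` makes the flow a Dobrushin contraction with coefficient
`1 - |𝒳| c_min`, and the kernel moves by at most `L_p`, so
`bₙ₊₁ ≤ (1 - κ ρ^μ_n) bₙ + ρ^μ_n φ aₙ` with `κ = |𝒳| c_min - L_p - φ L_Q > 0` by the choice of
`φ < φ_max`. Divergence of `∑ ρ` then drives first `aₙ` and then `bₙ` to zero.
-/

section Norms

variable [Fintype X]

lemma l1_nonneg (μ : X → ℝ) : 0 ≤ l1 μ := sum_nonneg fun _ _ => abs_nonneg _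

lemma norm_le_l1 (μ : X → ℝ) : ‖μ‖ ≤ l1 μ :=
  (pi_norm_le_iff_of_nonneg (l1_nonneg μ)).2 fun x =>
    single_le_sum (f := fun y => |μ y|) (fun _ _ => abs_nonneg _) (mem_univ x)

lemma l1_sub_le_add (μ ν η : X → ℝ) :
    l1 (fun x => μ x - η x) ≤ l1 (fun x => μ x - ν x) + l1 (fun x => ν x - η x) := by
  rw [l1, l1, l1, ← sum_add_distrib]
  exact sum_le_sum fun x _ => abs_sub_le _ _ _

lemma l1_convex_comb_le {ρ : ℝ} (hρ0 : 0 ≤ ρ) (hρ1 : ρ ≤ 1) (μ ν : X → ℝ) :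
    l1 (fun x => (1 - ρ) * μ x + ρ * ν x) ≤ (1 - ρ) * l1 μ + ρ * l1 ν := by
  rw [l1, l1, l1, mul_sum, mul_sum, ← sum_add_distrib]
  refine sum_le_sum fun x _ => (abs_add_le _ _).trans_eq ?_
  rw [abs_mul, abs_mul, abs_of_nonneg hρ0, abs_of_nonneg (sub_nonneg.2 hρ1)]

lemma l1_sub_le_two {μ ν : X → ℝ} (hμ : IsProb μ) (hν : IsProb ν) :
    l1 (fun x => μ x - ν x) ≤ 2 := by
  calc l1 (fun x => μ x - ν x) ≤ ∑ x, (μ x + ν x) :=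
        sum_le_sum fun x _ => (abs_sub _ _).trans_eq <| by
          rw [abs_of_nonneg (hμ.1 x), abs_of_nonneg (hν.1 x)]
    _ = 2 := by rw [sum_add_distrib, hμ.2, hν.2]; norm_num

lemma l1_eq_one {μ : X → ℝ} (hμ : IsProb μ) : l1 μ = 1 :=
  (sum_congr rfl fun x _ => abs_of_nonneg (hμ.1 x)).trans hμ.2

lemma sum_mul_le_of_isProb {w v : X → ℝ} {M : ℝ} (hw : IsProb w) (hv : ∀ x, v x ≤ M) :
    ∑ x, w x * v x ≤ M :=
  calc ∑ x, w x * v x ≤ ∑ x, w x * M :=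
        sum_le_sum fun x _ => mul_le_mul_of_nonneg_left (hv x) (hw.1 x)
    _ = M := by rw [← sum_mul, hw.2, one_mul]

lemma le_sum_mul_of_isProb {w v : X → ℝ} {M : ℝ} (hw : IsProb w) (hv : ∀ x, M ≤ v x) :
    M ≤ ∑ x, w x * v x :=
  calc M = ∑ x, w x * M := by rw [← sum_mul, hw.2, one_mul]
    _ ≤ ∑ x, w x * v x := sum_le_sum fun x _ => mul_le_mul_of_nonneg_left (hv x) (hw.1 x)

lemma abs_sum_mul_le_of_isProb {w v : X → ℝ} {M : ℝ} (hw : IsProb w) (hv : ∀ x, |v x| ≤ M) :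
    |∑ x, w x * v x| ≤ M :=
  (abs_sum_le_sum_abs _ _).trans <| (sum_mul_le_of_isProb hw hv).trans_eq' <|
    sum_congr rfl fun x _ => by rw [abs_mul, abs_of_nonneg (hw.1 x)]

lemma isProb_mixture {Y : Type*} [Fintype Y] {w : Y → ℝ} {K : Y → X → ℝ} (hw : IsProb w)
    (hK : ∀ y, IsProb (K y)) : IsProb (fun x => ∑ y, w y * K y x) :=
  ⟨fun _ => sum_nonneg fun y _ => mul_nonneg (hw.1 y) ((hK y).1 _), by
    rw [sum_comm, ← hw.2]
    exact sum_congr rfl fun y _ => by rw [← mul_sum, (hK y).2, mul_one]⟩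

lemma l1_sum_mul_le {Y : Type*} [Fintype Y] (m : Y → ℝ) (K : Y → X → ℝ) :
    l1 (fun x => ∑ y, m y * K y x) ≤ ∑ y, |m y| * l1 (K y) :=
  calc l1 (fun x => ∑ y, m y * K y x) ≤ ∑ x, ∑ y, |m y| * |K y x| :=
        sum_le_sum fun x _ => (abs_sum_le_sum_abs _ _).trans_eq <| by simp only [abs_mul]
    _ = ∑ y, |m y| * l1 (K y) := by rw [sum_comm]; simp only [l1, mul_sum]

lemma card_mul_le_one {w : X → ℝ} {c : ℝ} (hw : IsProb w) (hc : ∀ x, c ≤ w x) :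
    Fintype.card X * c ≤ 1 := by
  calc (Fintype.card X : ℝ) * c = ∑ _x : X, c := by simp
    _ ≤ 1 := hw.2 ▸ sum_le_sum fun x _ => hc x

lemma sum_mul_abs_sub_mean_le {π w : X → ℝ} {δ : ℝ} (hπ : IsProb π) (hw : ∀ x, |w x| ≤ δ) :
    ∑ x, π x * |w x - ∑ y, π y * w y| ≤ δ := by
  set m := ∑ y, π y * w y
  have hm : |m| ≤ δ := abs_sum_mul_le_of_isProb hπ hw
  -- from `(δ - w) (δ + m) ≥ 0` and `(δ + w) (δ - m) ≥ 0`
  have hpt : ∀ x, δ * |w x - m| ≤ δ ^ 2 - w x * m := fun x => by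
    obtain ⟨h1, h2⟩ := abs_le.1 (hw x)
    obtain ⟨h3, h4⟩ := abs_le.1 hm
    rcases abs_cases (w x - m) with ⟨h, -⟩ | ⟨h, -⟩ <;> rw [h] <;> nlinarith
  have hvar : δ * ∑ x, π x * |w x - m| ≤ δ ^ 2 - m ^ 2 :=
    calc δ * ∑ x, π x * |w x - m| = ∑ x, π x * (δ * |w x - m|) := by
          rw [mul_sum]; exact sum_congr rfl fun x _ => by ring
      _ ≤ ∑ x, π x * (δ ^ 2 - w x * m) :=
          sum_le_sum fun x _ => mul_le_mul_of_nonneg_left (hpt x) (hπ.1 x)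
      _ = δ ^ 2 - m ^ 2 := by
          simp only [mul_sub, sum_sub_distrib, ← sum_mul, ← mul_assoc, hπ.2]; ring
  -- only needed to settle the case `δ = 0`
  have hcrude : ∑ x, π x * |w x - m| ≤ 2 * δ :=
    (le_abs_self _).trans <| abs_sum_mul_le_of_isProb hπ fun x => by
      rw [abs_abs]; linarith [abs_sub (w x) m, hw x]
  have hX : 0 ≤ ∑ x, π x * |w x - m| := sum_nonneg fun x _ => mul_nonneg (hπ.1 x) (abs_nonneg _)
  nlinarith

end Norms

section QTables

variable [Fintype X] [Fintype A]

lemma abs_le_norm_table (Q : X → A → ℝ) (x : X) (a : A) : |Q x a| ≤ ‖Q‖ :=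
  (norm_le_pi_norm (Q x) a).trans (norm_le_pi_norm Q x)

lemma norm_table_le [Nonempty X] [Nonempty A] {Q : X → A → ℝ} {M : ℝ}
    (h : ∀ x a, |Q x a| ≤ M) : ‖Q‖ ≤ M :=
  (pi_norm_le_iff_of_nonempty Q).2 fun x => (pi_norm_le_iff_of_nonempty (Q x)).2 (h x)

variable [Nonempty A]

lemma abs_minRow_sub_minRow_le (q q' : A → ℝ) : |minRow q - minRow q'| ≤ ‖q - q'‖ := by
  have key : ∀ q q' : A → ℝ, minRow q - minRow q' ≤ ‖q - q'‖ := by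
    intro q q'
    obtain ⟨a, -, ha⟩ := exists_mem_eq_inf' univ_nonempty q'
    have h1 : minRow q ≤ q a := inf'_le _ (mem_univ a)
    have h2 : q a - q' a ≤ ‖q - q'‖ := (le_abs_self _).trans (norm_le_pi_norm (q - q') a)
    have hm : minRow q' = q' a := ha
    linarith
  exact abs_sub_le_iff.2 ⟨key q q', norm_sub_rev q q' ▸ key q' q⟩

lemma abs_minRow_le_norm (q : A → ℝ) : |minRow q| ≤ ‖q‖ := by
  simpa [minRow, inf'_const] using abs_minRow_sub_minRow_le q 0

end QTables

section Bellman

variable [Fintype X] [Fintype A] [Nonempty A]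
  {f : X → A → (X → ℝ) → ℝ} {p : X → A → (X → ℝ) → X → ℝ} {γ : ℝ} {μ : X → ℝ}

lemma abs_bell_le (hγ : 0 ≤ γ) (hp : ∀ x a, IsProb (p x a μ)) (Q : X → A → ℝ) (x : X) (a : A) :
    |bell f p γ μ Q x a| ≤ |f x a μ| + γ * ‖Q‖ := by
  refine (abs_add_le _ _).trans (add_le_add_right ?_ _)
  rw [abs_mul, abs_of_nonneg hγ]
  exact mul_le_mul_of_nonneg_left (abs_sum_mul_le_of_isProb (hp x a) fun x' =>
    (abs_minRow_le_norm _).trans (norm_le_pi_norm Q x')) hγ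

lemma abs_bell_sub_bell_le {μ' : X → ℝ} (hγ : 0 ≤ γ) {εf εp : ℝ}
    (hf : ∀ x a, |f x a μ - f x a μ'| ≤ εf)
    (hpμ : ∀ x a, ∑ x', |p x a μ x' - p x a μ' x'| ≤ εp) (Q : X → A → ℝ) (x : X) (a : A) :
    |bell f p γ μ Q x a - bell f p γ μ' Q x a| ≤ εf + γ * εp * ‖Q‖ := by
  have h : bell f p γ μ Q x a - bell f p γ μ' Q x a
      = (f x a μ - f x a μ') + γ * ∑ x', (p x a μ x' - p x a μ' x') * minRow (Q x') := by
    simp only [bell, sub_mul, sum_sub_distrib]; ring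
  have hsum : |∑ x', (p x a μ x' - p x a μ' x') * minRow (Q x')| ≤ εp * ‖Q‖ :=
    calc _ ≤ ∑ x', |p x a μ x' - p x a μ' x'| * ‖Q‖ :=
          (abs_sum_le_sum_abs _ _).trans <| sum_le_sum fun x' _ => by
            rw [abs_mul]
            exact mul_le_mul_of_nonneg_left
              ((abs_minRow_le_norm _).trans (norm_le_pi_norm Q x')) (abs_nonneg _)
      _ ≤ εp * ‖Q‖ := by
          rw [← sum_mul]; exact mul_le_mul_of_nonneg_right (hpμ x a) (norm_nonneg Q)
  rw [h, mul_assoc]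
  refine (abs_add_le _ _).trans (add_le_add (hf x a) ?_)
  rw [abs_mul, abs_of_nonneg hγ]
  exact mul_le_mul_of_nonneg_left hsum hγ

variable [Nonempty X]

lemma norm_bell_sub_bell_le (hγ : 0 ≤ γ) (hp : ∀ x a, IsProb (p x a μ)) (Q Q' : X → A → ℝ) :
    ‖bell f p γ μ Q - bell f p γ μ Q'‖ ≤ γ * ‖Q - Q'‖ := by
  refine norm_table_le fun x a => ?_
  have h : bell f p γ μ Q x a - bell f p γ μ Q' x a
      = γ * ∑ x', p x a μ x' * (minRow (Q x') - minRow (Q' x')) := by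
    simp only [bell, mul_sub, sum_sub_distrib]; ring
  rw [Pi.sub_apply, Pi.sub_apply, h, abs_mul, abs_of_nonneg hγ]
  exact mul_le_mul_of_nonneg_left (abs_sum_mul_le_of_isProb (hp x a) fun x' =>
    (abs_minRow_sub_minRow_le _ _).trans (norm_le_pi_norm (Q - Q') x')) hγ

lemma norm_le_of_bell_eq_self (hγ0 : 0 ≤ γ) (hγ1 : γ < 1) (hp : ∀ x a, IsProb (p x a μ))
    {fnorm : ℝ} (hf : ∀ x a, |f x a μ| ≤ fnorm) {Q : X → A → ℝ} (hQ : bell f p γ μ Q = Q) :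
    ‖Q‖ ≤ fnorm / (1 - γ) := by
  have h : ‖Q‖ ≤ fnorm + γ * ‖Q‖ := norm_table_le fun x a =>
    calc |Q x a| = |bell f p γ μ Q x a| := by rw [hQ]
      _ ≤ fnorm + γ * ‖Q‖ := (abs_bell_le hγ0 hp Q x a).trans (by linarith [hf x a])
  rw [le_div_iff₀ (by linarith)]
  linarith

lemma norm_sub_le_of_bell_eq_self {μ' : X → ℝ} (hγ0 : 0 ≤ γ) (hγ1 : γ < 1)
    (hp : ∀ x a, IsProb (p x a μ)) {εf εp : ℝ} (hf : ∀ x a, |f x a μ - f x a μ'| ≤ εf)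
    (hpμ : ∀ x a, ∑ x', |p x a μ x' - p x a μ' x'| ≤ εp) {Q Q' : X → A → ℝ}
    (hQ : bell f p γ μ Q = Q) (hQ' : bell f p γ μ' Q' = Q') :
    ‖Q - Q'‖ ≤ (εf + γ * εp * ‖Q'‖) / (1 - γ) := by
  have h : ‖Q - Q'‖ ≤ γ * ‖Q - Q'‖ + (εf + γ * εp * ‖Q'‖) :=
    calc ‖Q - Q'‖
        = ‖(bell f p γ μ Q - bell f p γ μ Q') + (bell f p γ μ Q' - bell f p γ μ' Q')‖ := by
          rw [hQ, hQ', sub_add_sub_cancel]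
      _ ≤ _ := norm_add_le_of_le (norm_bell_sub_bell_le hγ0 hp Q Q')
          (norm_table_le (abs_bell_sub_bell_le hγ0 hf hpμ Q'))
  rw [le_div_iff₀ (by linarith)]
  linarith

lemma norm_sub_le_mul_of_bell_eq_self {μ' : X → ℝ} (hγ0 : 0 ≤ γ) (hγ1 : γ < 1)
    (hp : ∀ x a, IsProb (p x a μ)) (hp' : ∀ x a, IsProb (p x a μ')) {fnorm Lf Lp d : ℝ}
    (hf : ∀ x a, |f x a μ'| ≤ fnorm) (hLf : ∀ x a, |f x a μ - f x a μ'| ≤ Lf * d)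
    (hLp : ∀ x a, ∑ x', |p x a μ x' - p x a μ' x'| ≤ Lp * d) (hLp0 : 0 ≤ Lp) (hd : 0 ≤ d)
    {Q Q' : X → A → ℝ} (hQ : bell f p γ μ Q = Q) (hQ' : bell f p γ μ' Q' = Q') :
    ‖Q - Q'‖ ≤ (Lf + γ / (1 - γ) * Lp * fnorm) / (1 - γ) * d :=
  calc ‖Q - Q'‖ ≤ (Lf * d + γ * (Lp * d) * ‖Q'‖) / (1 - γ) :=
        norm_sub_le_of_bell_eq_self hγ0 hγ1 hp hLf hLp hQ hQ'
    _ ≤ (Lf * d + γ * (Lp * d) * (fnorm / (1 - γ))) / (1 - γ) := by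
        gcongr
        exact norm_le_of_bell_eq_self hγ0 hγ1 hp' hf hQ'
    _ = (Lf + γ / (1 - γ) * Lp * fnorm) / (1 - γ) * d := by ring

end Bellman

section Pushforward

variable [Fintype X] [Fintype A] {p : X → A → (X → ℝ) → X → ℝ} {μ : X → ℝ}

lemma isProb_ppush {π : X → A → ℝ} {ν : X → ℝ} (hp : ∀ x a, IsProb (p x a μ))
    (hπ : ∀ x, IsProb (π x)) (hν : IsProb ν) : IsProb (Ppush p π μ ν) :=
  isProb_mixture hν fun x' => isProb_mixture (hπ x') (hp x')

lemma l1_ppush_le (ν : X → ℝ) (π : X → A → ℝ) (D : X → A → X → ℝ) :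
    l1 (fun x => ∑ x', ν x' * ∑ a, π x' a * D x' a x)
      ≤ ∑ x', |ν x'| * ∑ a, |π x' a| * l1 (D x' a) :=
  (l1_sum_mul_le _ _).trans <| sum_le_sum fun _ _ =>
    mul_le_mul_of_nonneg_left (l1_sum_mul_le _ _) (abs_nonneg _)

lemma l1_ppush_sub_ppush_policy_le {π π' : X → A → ℝ} {ν : X → ℝ} {η : ℝ}
    (hp : ∀ x a, IsProb (p x a μ)) (hν : IsProb ν) (hπ : ∀ x, ∑ a, |π x a - π' x a| ≤ η) :
    l1 (fun x => Ppush p π μ ν x - Ppush p π' μ ν x) ≤ η := by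
  have h : (fun x => Ppush p π μ ν x - Ppush p π' μ ν x)
      = fun x => ∑ x', ν x' * ∑ a, (π x' a - π' x' a) * p x' a μ x := by
    ext x
    simp only [Ppush, ← sum_sub_distrib, ← mul_sub, sub_mul]
  rw [h]
  refine (l1_ppush_le _ _ _).trans ?_
  simp only [abs_of_nonneg (hν.1 _), l1_eq_one (hp _ _), mul_one]
  exact sum_mul_le_of_isProb hν hπ

lemma l1_ppush_sub_ppush_kernel_le {π : X → A → ℝ} {μ' ν : X → ℝ} {η : ℝ}
    (hπ : ∀ x, IsProb (π x)) (hν : IsProb ν)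
    (hp : ∀ x a, ∑ x', |p x a μ x' - p x a μ' x'| ≤ η) :
    l1 (fun x => Ppush p π μ ν x - Ppush p π μ' ν x) ≤ η := by
  have h : (fun x => Ppush p π μ ν x - Ppush p π μ' ν x)
      = fun x => ∑ x', ν x' * ∑ a, π x' a * (p x' a μ x - p x' a μ' x) := by
    ext x
    simp only [Ppush, ← sum_sub_distrib, ← mul_sub]
  rw [h]
  refine (l1_ppush_le _ _ _).trans ?_
  simp only [abs_of_nonneg (hν.1 _), abs_of_nonneg ((hπ _).1 _)]
  exact sum_mul_le_of_isProb hν fun x' => sum_mul_le_of_isProb (hπ x') fun a => hp x' a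

/-- Dobrushin's contraction estimate. -/
lemma l1_ppush_sub_ppush_measure_le {π : X → A → ℝ} {ν ν' : X → ℝ} {c : ℝ}
    (hp : ∀ x a, IsProb (p x a μ)) (hc : ∀ x a x', c ≤ p x a μ x') (hπ : ∀ x, IsProb (π x))
    (hν : IsProb ν) (hν' : IsProb ν') :
    l1 (fun x => Ppush p π μ ν x - Ppush p π μ ν' x)
      ≤ (1 - Fintype.card X * c) * l1 (fun x => ν x - ν' x) := by
  set K : X → X → ℝ := fun x' x => ∑ a, π x' a * p x' a μ x
  have hK : ∀ x', IsProb (K x') := fun x' => isProb_mixture (hπ x') (hp x')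
  have hKc : ∀ x' x, c ≤ K x' x := fun x' x => le_sum_mul_of_isProb (hπ x') fun a => hc x' a x
  have hrow : ∀ x', l1 (fun x => K x' x - c) = 1 - Fintype.card X * c := fun x' => by
    rw [l1, sum_congr rfl fun x _ => abs_of_nonneg (sub_nonneg.2 (hKc x' x)), sum_sub_distrib,
      (hK x').2, sum_const, card_univ, nsmul_eq_mul]
  -- the total masses of `ν` and `ν'` agree, so `K` may be replaced by `K - c`
  have h : (fun x => Ppush p π μ ν x - Ppush p π μ ν' x)
      = fun x => ∑ x', (ν x' - ν' x') * (K x' x - c) := by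
    ext x
    simp only [Ppush, K, sub_mul, mul_sub, sum_sub_distrib, ← sum_mul, hν.2, hν'.2]
    ring
  rw [h]
  refine (l1_sum_mul_le _ _).trans_eq ?_
  simp only [hrow]
  rw [l1, ← sum_mul, mul_comm]

end Pushforward

section Softmin

variable [Fintype A] [Nonempty A]

lemma sum_softmin_denom_pos (φ : ℝ) (z : A → ℝ) : 0 < ∑ a, Real.exp (-φ * z a) :=
  sum_pos (fun _ _ => Real.exp_pos _) univ_nonempty

lemma isProb_softmin (φ : ℝ) (z : A → ℝ) : IsProb (softmin φ z) :=
  ⟨fun a => div_nonneg (Real.exp_pos _).le (sum_softmin_denom_pos φ z).le,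
    by simp only [softmin]; rw [← sum_div, div_self (sum_softmin_denom_pos φ z).ne']⟩

lemma hasDerivAt_softmin_add_smul (φ : ℝ) (z w : A → ℝ) (a : A) (t : ℝ) :
    HasDerivAt (fun t => softmin φ (z + t • w) a)
      (φ * softmin φ (z + t • w) a * (∑ b, softmin φ (z + t • w) b * w b - w a)) t := by
  have hexp : ∀ b, HasDerivAt (fun t => Real.exp (-φ * (z + t • w) b))
      (Real.exp (-φ * (z + t • w) b) * (-φ * w b)) t := fun b => by
    simpa using (((hasDerivAt_id t).mul_const (w b)).const_add (z b)).const_mul (-φ) |>.exp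
  refine ((hexp a).fun_div (HasDerivAt.fun_sum fun b _ => hexp b)
    (sum_softmin_denom_pos φ _).ne').congr_deriv ?_
  have hS := (sum_softmin_denom_pos φ (z + t • w)).ne'
  simp only [softmin, ← sum_div, div_mul_eq_mul_div]
  field_simp
  simp only [mul_sum, ← sum_neg_distrib, ← sum_sub_distrib]
  exact sum_congr rfl fun b _ => by ring

lemma abs_sign_le_one (x : ℝ) : |(SignType.sign x : ℝ)| ≤ 1 := by
  rcases lt_trichotomy x 0 with h | h | h <;> simp [h]

/- Mean value theorem along `z + t • (z' - z)`, tested against the signs of the increments: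
the derivative is `φ` times a mean absolute deviation of `z' - z`, which is at most `δ`. -/
lemma sum_abs_softmin_sub_le {φ δ : ℝ} (hφ : 0 ≤ φ) {z z' : A → ℝ}
    (h : ∀ a, |z' a - z a| ≤ δ) : ∑ a, |softmin φ z' a - softmin φ z a| ≤ φ * δ := by
  set w := z' - z
  set s : ℝ → A → ℝ := fun t => softmin φ (z + t • w)
  set c : A → ℝ := fun a => SignType.sign (s 1 a - s 0 a)
  set g : ℝ → ℝ := fun t => ∑ a, c a * s t a
  have hg : ∀ t, HasDerivAt g (∑ a, c a * (φ * s t a * (∑ b, s t b * w b - w a))) t :=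
    fun t => HasDerivAt.fun_sum fun a _ => (hasDerivAt_softmin_add_smul φ z w a t).const_mul (c a)
  have hg' : ∀ t, ∑ a, c a * (φ * s t a * (∑ b, s t b * w b - w a)) ≤ φ * δ := fun t =>
    calc _ ≤ ∑ a, φ * (s t a * |w a - ∑ b, s t b * w b|) :=
          sum_le_sum fun a _ => (le_abs_self _).trans <| by
            rw [abs_mul, abs_mul, abs_mul, abs_of_nonneg hφ,
              abs_of_nonneg ((isProb_softmin φ _).1 a), abs_sub_comm, mul_assoc φ]
            exact mul_le_of_le_one_left
              (mul_nonneg hφ (mul_nonneg ((isProb_softmin φ _).1 a) (abs_nonneg _)))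
              (abs_sign_le_one _)
      _ ≤ φ * δ := by
          rw [← mul_sum]
          exact mul_le_mul_of_nonneg_left (sum_mul_abs_sub_mean_le (isProb_softmin φ _) h) hφ
  have hmvt := image_sub_le_mul_sub_of_deriv_le (fun t => (hg t).differentiableAt)
    (fun t => (hg t).deriv ▸ hg' t) zero_le_one
  have hs1 : s 1 = softmin φ z' := by simp [s, w]
  have hs0 : s 0 = softmin φ z := by simp [s]
  have hgs : g 1 - g 0 = ∑ a, |softmin φ z' a - softmin φ z a| := by
    simp only [g, c, ← sum_sub_distrib, ← mul_sub, hs1, hs0]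
    exact sum_congr rfl fun a _ => by rw [mul_comm, self_mul_sign]
  linarith

end Softmin

section Recursion

lemma le_mul_exp_neg_sum {b ρ : ℕ → ℝ} {c : ℝ} (hb : ∀ n, 0 ≤ b n)
    (hrec : ∀ n, b (n + 1) ≤ (1 - c * ρ n) * b n) (k : ℕ) :
    b k ≤ b 0 * Real.exp (-(c * ∑ i ∈ range k, ρ i)) := by
  induction k with
  | zero => simp
  | succ k ih =>
    calc b (k + 1) ≤ Real.exp (-(c * ρ k)) * b k :=
          (hrec k).trans <| mul_le_mul_of_nonneg_right
            (by linarith [Real.add_one_le_exp (-(c * ρ k))]) (hb k)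
      _ ≤ Real.exp (-(c * ρ k)) * (b 0 * Real.exp (-(c * ∑ i ∈ range k, ρ i))) :=
          mul_le_mul_of_nonneg_left ih (Real.exp_pos _).le
      _ = b 0 * Real.exp (-(c * ∑ i ∈ range (k + 1), ρ i)) := by
          rw [sum_range_succ, mul_add, neg_add, Real.exp_add]; ring

lemma tendsto_zero_of_le_one_sub_mul {b ρ : ℕ → ℝ} {c : ℝ} (hc : 0 < c) (hb : ∀ n, 0 ≤ b n)
    (hρ : ∀ n, 0 ≤ ρ n) (hdiv : ¬ Summable ρ) (hrec : ∀ n, b (n + 1) ≤ (1 - c * ρ n) * b n) :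
    Tendsto b atTop (nhds 0) := by
  have hsum := (not_summable_iff_tendsto_nat_atTop_of_nonneg hρ).1 hdiv
  have hexp : Tendsto (fun k => b 0 * Real.exp (-(c * ∑ i ∈ range k, ρ i))) atTop (nhds 0) := by
    simpa using (Real.tendsto_exp_atBot.comp
      (tendsto_neg_atTop_atBot.comp (hsum.const_mul_atTop hc))).const_mul (b 0)
  exact squeeze_zero hb (le_mul_exp_neg_sum hb hrec) hexp

lemma tendsto_zero_of_le_one_sub_mul_add {a ρ ε : ℕ → ℝ} {c : ℝ} (hc : 0 < c)
    (ha : ∀ n, 0 ≤ a n) (hρ : ∀ n, 0 ≤ ρ n) (hcρ : ∀ n, c * ρ n ≤ 1) (hdiv : ¬ Summable ρ)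
    (hε : Tendsto ε atTop (nhds 0)) (hrec : ∀ n, a (n + 1) ≤ (1 - c * ρ n) * a n + ρ n * ε n) :
    Tendsto a atTop (nhds 0) := by
  refine tendsto_order.2 ⟨fun r hr => Eventually.of_forall fun n => hr.trans_le (ha n),
    fun r hr => ?_⟩
  obtain ⟨N, hN⟩ := eventually_atTop.1 (hε.eventually (ge_mem_nhds (by positivity : 0 < c * r / 2)))
  -- the excess of `aₙ` over `r / 2` contracts without perturbation from `N` on
  set b : ℕ → ℝ := fun k => max (a (N + k) - r / 2) 0
  have hb : Tendsto b atTop (nhds 0) := by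
    refine tendsto_zero_of_le_one_sub_mul hc (fun k => le_max_right _ _) (fun k => hρ (N + k))
      (fun h => hdiv ((summable_nat_add_iff N).1 (by simpa [add_comm] using h))) fun k => ?_
    have h1 : a (N + (k + 1)) ≤ (1 - c * ρ (N + k)) * a (N + k) + ρ (N + k) * ε (N + k) :=
      hrec (N + k)
    have h2 := mul_le_mul_of_nonneg_left (hN (N + k) (Nat.le_add_right N k)) (hρ (N + k))
    refine max_le ?_ (mul_nonneg (by linarith [hcρ (N + k)]) (le_max_right _ _))
    calc a (N + (k + 1)) - r / 2 ≤ (1 - c * ρ (N + k)) * (a (N + k) - r / 2) := by linarith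
      _ ≤ (1 - c * ρ (N + k)) * b k :=
          mul_le_mul_of_nonneg_left (le_max_left _ _) (by linarith [hcρ (N + k)])
  obtain ⟨K, hK⟩ := eventually_atTop.1 (hb.eventually (gt_mem_nhds (half_pos hr)))
  refine eventually_atTop.2 ⟨N + K, fun n hn => ?_⟩
  obtain ⟨k, rfl⟩ := Nat.exists_eq_add_of_le (le_of_add_le_left hn)
  linarith [hK k (by omega), le_max_left (a (N + k) - r / 2) 0]

lemma tendsto_zero_of_two_timescale {a b ρ ρ' : ℕ → ℝ} {c c' C K : ℝ} (hc : 0 < c) (hc' : 0 < c')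
    (ha0 : ∀ n, 0 ≤ a n) (hb0 : ∀ n, 0 ≤ b n) (hρ : ∀ n, 0 < ρ n) (hρ' : ∀ n, 0 ≤ ρ' n)
    (hcρ : ∀ n, c * ρ n ≤ 1) (hcρ' : ∀ n, c' * ρ' n ≤ 1) (hdiv : ¬ Summable ρ)
    (hdiv' : ¬ Summable ρ') (hratio : Tendsto (fun n => ρ' n / ρ n) atTop (nhds 0))
    (ha : ∀ n, a (n + 1) ≤ (1 - c * ρ n) * a n + C * ρ' n)
    (hb : ∀ n, b (n + 1) ≤ (1 - c' * ρ' n) * b n + ρ' n * (K * a n)) :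
    Tendsto a atTop (nhds 0) ∧ Tendsto b atTop (nhds 0) := by
  have ha' : Tendsto a atTop (nhds 0) :=
    tendsto_zero_of_le_one_sub_mul_add (ε := fun n => C * (ρ' n / ρ n)) hc ha0
      (fun n => (hρ n).le) hcρ hdiv (by simpa using hratio.const_mul C) fun n =>
        (ha n).trans_eq (by field_simp [(hρ n).ne'])
  exact ⟨ha', tendsto_zero_of_le_one_sub_mul_add hc' hb0 hρ' hcρ' hdiv'
    (by simpa using ha'.const_mul K) hb⟩

end Recursion

section Iteration

lemma norm_add_smul_sub_sub_le {E : Type*} [SeminormedAddCommGroup E] [NormedSpace ℝ E]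
    {T : E → E} {x q : E} {γ ρ : ℝ} (hq : T q = q) (hT : ‖T x - T q‖ ≤ γ * ‖x - q‖)
    (hρ0 : 0 ≤ ρ) (hρ1 : ρ ≤ 1) : ‖x + ρ • (T x - x) - q‖ ≤ (1 - (1 - γ) * ρ) * ‖x - q‖ := by
  have h : x + ρ • (T x - x) - q = (1 - ρ) • (x - q) + ρ • (T x - T q) := by
    rw [hq, sub_smul, one_smul, smul_sub, smul_sub, smul_sub]; abel
  rw [h]
  refine (norm_add_le _ _).trans ?_
  rw [norm_smul, norm_smul, Real.norm_of_nonneg hρ0, Real.norm_of_nonneg (by linarith)]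
  nlinarith [norm_nonneg (x - q)]

variable [Fintype X]

lemma isProb_add_mul_sub {μ P : X → ℝ} {ρ : ℝ} (hρ0 : 0 ≤ ρ) (hρ1 : ρ ≤ 1) (hμ : IsProb μ)
    (hP : IsProb P) : IsProb (fun x => μ x + ρ * (P x - μ x)) :=
  ⟨fun x => by nlinarith [hμ.1 x, hP.1 x], by
    rw [sum_add_distrib, ← mul_sum, sum_sub_distrib, hμ.2, hP.2]; ring⟩

lemma l1_add_mul_sub_sub_le {μ P ν : X → ℝ} {ρ : ℝ} (hρ0 : 0 ≤ ρ) (hρ1 : ρ ≤ 1) :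
    l1 (fun x => μ x + ρ * (P x - μ x) - ν x)
      ≤ (1 - ρ) * l1 (fun x => μ x - ν x) + ρ * l1 (fun x => P x - ν x) := by
  convert l1_convex_comb_le hρ0 hρ1 (fun x => μ x - ν x) (fun x => P x - ν x) using 3
  ring

end Iteration

section MeanField

variable [Fintype X] [Fintype A] [Nonempty A] {p : X → A → (X → ℝ) → X → ℝ} {φ : ℝ}

lemma isProb_P2_iterate {μs : ℕ → X → ℝ} {Qs : ℕ → X → A → ℝ} {ρ : ℕ → ℝ}
    (hp : ∀ μ, IsProb μ → ∀ x a, IsProb (p x a μ)) (hρ : ∀ n, 0 < ρ n ∧ ρ n < 1)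
    (h0 : IsProb (μs 0))
    (hrec : ∀ n, μs (n + 1) = fun x => μs n x + ρ n * P2 φ p (Qs n) (μs n) x) (n : ℕ) :
    IsProb (μs n) := by
  induction n with
  | zero => exact h0
  | succ n ih =>
    rw [hrec n]
    exact isProb_add_mul_sub (hρ n).1.le (hρ n).2.le ih
      (isProb_ppush (hp _ ih) (fun x => isProb_softmin φ _) ih)

lemma l1_sub_add_mul_P2_le {μ : X → ℝ} {Q : X → A → ℝ} {ρ : ℝ} (hρ : 0 ≤ ρ) (hμ : IsProb μ)
    (hp : ∀ x a, IsProb (p x a μ)) : l1 (fun x => μ x - (μ x + ρ * P2 φ p Q μ x)) ≤ 2 * ρ := by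
  have h2 := l1_sub_le_two (isProb_ppush hp (fun x => isProb_softmin φ (Q x)) hμ) hμ
  calc l1 (fun x => μ x - (μ x + ρ * P2 φ p Q μ x)) = ρ * l1 (P2 φ p Q μ) := by
        simp only [l1, sub_add_cancel_left, abs_neg, abs_mul, abs_of_nonneg hρ, mul_sum]
    _ ≤ 2 * ρ := by rw [mul_comm]; exact mul_le_mul_of_nonneg_right h2 hρ

lemma norm_T2_step_sub_le [Nonempty X] {f : X → A → (X → ℝ) → ℝ} {γ ρ ρ' L : ℝ}
    {μ μ' : X → ℝ} {Q Q' q q' : X → A → ℝ} (hγ : 0 ≤ γ) (hμ : IsProb μ)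
    (hp : ∀ x a, IsProb (p x a μ)) (hq : bell f p γ μ q = q)
    (hqq' : ‖q - q'‖ ≤ L * l1 (fun y => μ y - μ' y)) (hL : 0 ≤ L) (hρ0 : 0 ≤ ρ) (hρ1 : ρ ≤ 1)
    (hρ' : 0 ≤ ρ') (hμ' : μ' = fun x => μ x + ρ' * P2 φ p Q μ x)
    (hQ' : Q' = fun x a => Q x a + ρ * T2 f p γ Q μ x a) :
    ‖Q' - q'‖ ≤ (1 - (1 - γ) * ρ) * ‖Q - q‖ + 2 * L * ρ' := by
  subst hμ' hQ'
  calc _ ≤ ‖(fun x a => Q x a + ρ * T2 f p γ Q μ x a) - q‖ + ‖q - q'‖ :=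
        norm_sub_le_norm_sub_add_norm_sub _ q _
    _ ≤ (1 - (1 - γ) * ρ) * ‖Q - q‖ + L * (2 * ρ') :=
        add_le_add (norm_add_smul_sub_sub_le hq (norm_bell_sub_bell_le hγ hp Q q) hρ0 hρ1)
          (hqq'.trans (mul_le_mul_of_nonneg_left (l1_sub_add_mul_P2_le hρ' hμ hp) hL))
    _ = (1 - (1 - γ) * ρ) * ‖Q - q‖ + 2 * L * ρ' := by ring

lemma l1_ppush_softmin_sub_le {c Lp : ℝ} {μ μ' : X → ℝ} {Q Q' Q'' : X → A → ℝ}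
    (hφ : 0 ≤ φ) (hμ : IsProb μ) (hμ' : IsProb μ') (hp : ∀ x a, IsProb (p x a μ))
    (hp' : ∀ x a, IsProb (p x a μ')) (hc : ∀ x a x', c ≤ p x a μ x')
    (hLp : ∀ x a, ∑ x', |p x a μ x' - p x a μ' x'| ≤ Lp * l1 (fun y => μ y - μ' y))
    (hfix : Ppush p (fun x => softmin φ (Q'' x)) μ' μ' = μ') :
    l1 (fun x => Ppush p (fun x' => softmin φ (Q x')) μ μ x - μ' x)
      ≤ φ * ‖Q - Q'‖ + (1 - Fintype.card X * c + Lp) * l1 (fun y => μ y - μ' y)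
        + φ * ‖Q' - Q''‖ := by
  set π' : X → A → ℝ := fun x => softmin φ (Q' x)
  have hsoft : ∀ Q₁ Q₂ : X → A → ℝ, ∀ x,
      ∑ a, |softmin φ (Q₁ x) a - softmin φ (Q₂ x) a| ≤ φ * ‖Q₁ - Q₂‖ := fun Q₁ Q₂ x =>
    sum_abs_softmin_sub_le hφ fun a => abs_le_norm_table (Q₁ - Q₂) x a
  have hpolicy := l1_ppush_sub_ppush_policy_le hp hμ (hsoft Q Q')
  have hmeasure :=
    l1_ppush_sub_ppush_measure_le (π := π') hp hc (fun x => isProb_softmin φ _) hμ hμ'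
  have hkernel :=
    l1_ppush_sub_ppush_kernel_le (ν := μ') (fun x => isProb_softmin φ (Q' x)) hμ' hLp
  have hpolicy' := l1_ppush_sub_ppush_policy_le hp' hμ' (hsoft Q' Q'')
  rw [hfix] at hpolicy'
  linarith [l1_sub_le_add (fun x => Ppush p (fun x' => softmin φ (Q x')) μ μ x)
    (Ppush p π' μ μ) μ', l1_sub_le_add (Ppush p π' μ μ) (Ppush p π' μ μ') μ',
    l1_sub_le_add (Ppush p π' μ μ') (Ppush p π' μ' μ') μ']

lemma l1_P2_step_sub_le {c Lp L ρ : ℝ} {μ μ' ν : X → ℝ} {Q q q' : X → A → ℝ}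
    (hφ : 0 ≤ φ) (hρ0 : 0 ≤ ρ) (hρ1 : ρ ≤ 1) (hμ : IsProb μ) (hν : IsProb ν)
    (hp : ∀ x a, IsProb (p x a μ)) (hpν : ∀ x a, IsProb (p x a ν))
    (hc : ∀ x a x', c ≤ p x a μ x')
    (hLp : ∀ x a, ∑ x', |p x a μ x' - p x a ν x'| ≤ Lp * l1 (fun y => μ y - ν y))
    (hfix : Ppush p (fun x => softmin φ (q' x)) ν ν = ν)
    (hqq' : ‖q - q'‖ ≤ L * l1 (fun y => μ y - ν y))
    (hμ' : μ' = fun x => μ x + ρ * P2 φ p Q μ x) :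
    l1 (fun x => μ' x - ν x)
      ≤ (1 - (Fintype.card X * c - Lp - φ * L) * ρ) * l1 (fun y => μ y - ν y)
        + ρ * (φ * ‖Q - q‖) := by
  subst hμ'
  have hstep := (l1_add_mul_sub_sub_le (μ := μ) hρ0 hρ1).trans <| add_le_add le_rfl <|
    mul_le_mul_of_nonneg_left
      (l1_ppush_softmin_sub_le (Q := Q) (Q' := q) hφ hμ hν hp hpν hc hLp hfix) hρ0
  have hq := mul_le_mul_of_nonneg_left (mul_le_mul_of_nonneg_left hqq' hφ) hρ0
  simp only [P2]
  linarith

end MeanField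

lemma pos_and_mul_lt_of_lt_div_mul_div {N k c D φ : ℝ} (hN : 0 < N) (hk : 1 ≤ k) (hc : 0 < c)
    (hφ : 0 < φ) (h : φ < N / k * (c / D)) : 0 < D / c ∧ φ * (D / c) < N := by
  -- `c / D ≤ 0` whenever `D ≤ 0`, including the junk value at `D = 0`
  have hD : 0 < D := by
    by_contra! hD
    have : N / k * (c / D) ≤ 0 :=
      mul_nonpos_of_nonneg_of_nonpos (by positivity) (div_nonpos_of_nonneg_of_nonpos hc.le hD)
    linarith
  refine ⟨div_pos hD hc, ?_⟩
  calc φ * (D / c) < N / k * (c / D) * (D / c) := mul_lt_mul_of_pos_right h (div_pos hD hc)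
    _ = N / k := by field_simp
    _ ≤ N := div_le_self hN.le hk

theorem mfg_two_timescale_convergence_general [Fintype X] [Fintype A] [Nonempty X] [Nonempty A]
    (γ : ℝ) (hγ0 : 0 < γ) (hγ1 : γ < 1)
    (f : X → A → (X → ℝ) → ℝ) (fnorm : ℝ)
    (hf : ∀ x a μ, IsProb μ → |f x a μ| ≤ fnorm)
    (p : X → A → (X → ℝ) → X → ℝ)
    (hp0 : ∀ x a μ x', IsProb μ → 0 ≤ p x a μ x')
    (hp1 : ∀ x a μ, IsProb μ → ∑ x', p x a μ x' = 1)
    (cmin Lf Lp : ℝ)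
    (hcmin : ∀ x a μ x', IsProb μ → cmin ≤ p x a μ x')
    (hLp0 : 0 ≤ Lp)
    (hLf : ∀ x a μ μ', IsProb μ → IsProb μ' →
      |f x a μ - f x a μ'| ≤ Lf * l1 (fun y => μ y - μ' y))
    (hLp : ∀ x a μ μ', IsProb μ → IsProb μ' →
      ∑ x', |p x a μ x' - p x a μ' x'| ≤ Lp * l1 (fun y => μ y - μ' y))
    (hLpc : Lp < (Fintype.card X : ℝ) * cmin)
    (φ : ℝ) (hφ0 : 0 < φ)
    (hφmax : φ < ((Fintype.card X : ℝ) * cmin - Lp) / (Fintype.card A : ℝ)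
        * ((1 - γ) / (Lf + (γ / (1 - γ)) * Lp * fnorm)))
    -- Q*_μ : the unique fixed point of B_μ
    (Qstar : (X → ℝ) → X → A → ℝ)
    (hQstar : ∀ μ, IsProb μ → bell f p γ μ (Qstar μ) = Qstar μ)
    -- μ*φ : the unique fixed point of μ ↦ P^{softmin_φ Q*_μ, μ} μ
    (μstar : X → ℝ) (hμstar : IsProb μstar)
    (hμstarfix : Ppush p (fun x' => softmin φ (Qstar μstar x')) μstar μstar = μstar)
    -- learning rates
    (ρQ ρμ : ℕ → ℝ)
    (hρQ : ∀ n, 0 < ρQ n ∧ ρQ n < 1) (hρμ : ∀ n, 0 < ρμ n ∧ ρμ n < 1)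
    (hdivQ : ¬ Summable ρQ) (hdivμ : ¬ Summable ρμ)
    (hratio : Filter.Tendsto (fun n => ρμ n / ρQ n) Filter.atTop (nhds 0))
    -- the iterates
    (μseq : ℕ → X → ℝ) (Qseq : ℕ → X → A → ℝ)
    (hμ0 : IsProb (μseq 0))
    (hμrec : ∀ n, μseq (n + 1) = fun x => μseq n x + ρμ n * P2 φ p (Qseq n) (μseq n) x)
    (hQrec : ∀ n, Qseq (n + 1) = fun x a => Qseq n x a + ρQ n * T2 f p γ (Qseq n) (μseq n) x a) :
    Filter.Tendsto μseq Filter.atTop (nhds μstar)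
      ∧ Filter.Tendsto Qseq Filter.atTop (nhds (Qstar μstar)) := by
  have hp : ∀ μ, IsProb μ → ∀ x a, IsProb (p x a μ) := fun μ hμ x a =>
    ⟨fun x' => hp0 x a μ x' hμ, hp1 x a μ hμ⟩
  have hμ : ∀ n, IsProb (μseq n) := isProb_P2_iterate hp hρμ hμ0 hμrec
  set LQ := (Lf + γ / (1 - γ) * Lp * fnorm) / (1 - γ)
  obtain ⟨hLQ, hφLQ⟩ : 0 < LQ ∧ φ * LQ < Fintype.card X * cmin - Lp :=
    pos_and_mul_lt_of_lt_div_mul_div (sub_pos.2 hLpc) (by exact_mod_cast Fintype.card_pos)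
      (sub_pos.2 hγ1) hφ0 hφmax
  have hLip : ∀ μ μ', IsProb μ → IsProb μ' →
      ‖Qstar μ - Qstar μ'‖ ≤ LQ * l1 (fun y => μ y - μ' y) := fun μ μ' hμ hμ' =>
    norm_sub_le_mul_of_bell_eq_self hγ0.le hγ1 (hp μ hμ) (hp μ' hμ') (fun x a => hf x a μ' hμ')
      (fun x a => hLf x a μ μ' hμ hμ') (fun x a => hLp x a μ μ' hμ hμ') hLp0 (l1_nonneg _)
      (hQstar μ hμ) (hQstar μ' hμ')
  have hc1 : Fintype.card X * cmin ≤ 1 :=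
    card_mul_le_one (hp μstar hμstar (Classical.arbitrary X) (Classical.arbitrary A))
      fun x' => hcmin _ _ μstar x' hμstar
  obtain ⟨ha, hb⟩ := tendsto_zero_of_two_timescale
    (a := fun n => ‖Qseq n - Qstar (μseq n)‖) (b := fun n => l1 (fun x => μseq n x - μstar x))
    (sub_pos.2 hγ1) (sub_pos.2 hφLQ) (fun n => norm_nonneg _) (fun n => l1_nonneg _)
    (fun n => (hρQ n).1) (fun n => (hρμ n).1.le) (fun n => by nlinarith [hρQ n])
    (fun n => by nlinarith [hρμ n, mul_pos hφ0 hLQ]) hdivQ hdivμ hratio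
    (fun n => norm_T2_step_sub_le hγ0.le (hμ n) (hp _ (hμ n)) (hQstar _ (hμ n))
      (hLip _ _ (hμ n) (hμ (n + 1))) hLQ.le (hρQ n).1.le (hρQ n).2.le (hρμ n).1.le (hμrec n)
      (hQrec n))
    (fun n => l1_P2_step_sub_le hφ0.le (hρμ n).1.le (hρμ n).2.le (hμ n) hμstar (hp _ (hμ n))
      (hp _ hμstar) (fun x a x' => hcmin x a _ x' (hμ n)) (fun x a => hLp x a _ _ (hμ n) hμstar)
      hμstarfix (hLip _ _ (hμ n) hμstar) (hμrec n))
  refine ⟨tendsto_iff_norm_sub_tendsto_zero.2 (squeeze_zero (fun n => norm_nonneg _)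
    (fun n => norm_le_l1 _) hb), tendsto_iff_norm_sub_tendsto_zero.2 (squeeze_zero
    (fun n => norm_nonneg _) (fun n => ?_) (by simpa using ha.add (hb.const_mul LQ)))⟩
  exact (norm_sub_le_norm_sub_add_norm_sub _ (Qstar (μseq n)) _).trans
    (add_le_add le_rfl (hLip _ _ (hμ n) hμstar))

/-- convergence of the idealized two-timescale MFG scheme
(μ faster to 0, i.e. ρ^μ_n/ρ^Q_n → 0) to (μ*φ, Q*_{μ*φ}). -/
theorem mfg_two_timescale_convergence [Fintype X] [Fintype A] [Nonempty X] [Nonempty A]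
    (γ : ℝ) (hγ0 : 0 < γ) (hγ1 : γ < 1)
    (f : X → A → (X → ℝ) → ℝ) (fnorm : ℝ)
    (hf : ∀ x a μ, IsProb μ → |f x a μ| ≤ fnorm)
    (p : X → A → (X → ℝ) → X → ℝ)
    (hp0 : ∀ x a μ x', IsProb μ → 0 ≤ p x a μ x')
    (hp1 : ∀ x a μ, IsProb μ → ∑ x', p x a μ x' = 1)
    (cmin Lf Lp : ℝ) (hcmin0 : 0 ≤ cmin)
    (hcmin : ∀ x a μ x', IsProb μ → cmin ≤ p x a μ x')
    (hLf0 : 0 ≤ Lf) (hLp0 : 0 ≤ Lp)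
    (hLf : ∀ x a μ μ', IsProb μ → IsProb μ' →
      |f x a μ - f x a μ'| ≤ Lf * l1 (fun y => μ y - μ' y))
    (hLp : ∀ x a μ μ', IsProb μ → IsProb μ' →
      ∑ x', |p x a μ x' - p x a μ' x'| ≤ Lp * l1 (fun y => μ y - μ' y))
    (hLpc : Lp < (Fintype.card X : ℝ) * cmin)
    (φ : ℝ) (hφ0 : 0 < φ)
    (hφmax : φ < ((Fintype.card X : ℝ) * cmin - Lp) / (Fintype.card A : ℝ)
        * ((1 - γ) / (Lf + (γ / (1 - γ)) * Lp * fnorm)))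
    -- Q*_μ : the unique fixed point of B_μ
    (Qstar : (X → ℝ) → X → A → ℝ)
    (hQstar : ∀ μ, IsProb μ → bell f p γ μ (Qstar μ) = Qstar μ)
    -- μ*φ : the unique fixed point of μ ↦ P^{softmin_φ Q*_μ, μ} μ
    (μstar : X → ℝ) (hμstar : IsProb μstar)
    (hμstarfix : Ppush p (fun x' => softmin φ (Qstar μstar x')) μstar μstar = μstar)
    -- learning rates
    (ρQ ρμ : ℕ → ℝ)
    (hρQ : ∀ n, 0 < ρQ n ∧ ρQ n < 1) (hρμ : ∀ n, 0 < ρμ n ∧ ρμ n < 1)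
    (hdivQ : ¬ Summable ρQ) (hdivμ : ¬ Summable ρμ)
    (hsq : Summable (fun n => (ρQ n) ^ 2 + (ρμ n) ^ 2))
    (hratio : Filter.Tendsto (fun n => ρμ n / ρQ n) Filter.atTop (nhds 0))
    -- the iterates
    (μseq : ℕ → X → ℝ) (Qseq : ℕ → X → A → ℝ)
    (hμ0 : IsProb (μseq 0))
    (hμrec : ∀ n, μseq (n + 1) = fun x => μseq n x + ρμ n * P2 φ p (Qseq n) (μseq n) x)
    (hQrec : ∀ n, Qseq (n + 1) = fun x a => Qseq n x a + ρQ n * T2 f p γ (Qseq n) (μseq n) x a) :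
    Filter.Tendsto μseq Filter.atTop (nhds μstar)
      ∧ Filter.Tendsto Qseq Filter.atTop (nhds (Qstar μstar)) :=
  mfg_two_timescale_convergence_general γ hγ0 hγ1 f fnorm hf p hp0 hp1 cmin Lf Lp hcmin hLp0 hLf hLp
    hLpc φ hφ0 hφmax Qstar hQstar μstar hμstar hμstarfix ρQ ρμ hρQ hρμ hdivQ hdivμ hratio μseq Qseq
    hμ0 hμrec hQrec
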